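/- Let C₁ and C₂ be smooth plane cubics through p = (1:0:0), given locally at p with local coordinates such that on S = C₁ × C₂ ⊂ P⁸ (Segre embedding) local coordinates at φ(p,p) are z₀₂ and z₂₀, with z₀₁ ≡ (1/b)z₀₂², z₁₀ ≡ (1/a)z₂₀², z₁₁ ≡ (1/(ab))z₀₂²z₂₀², z₁₂ ≡ (1/a)z₀₂z₂₀², z₂₁ ≡ (1/b)z₀₂²z₂₀, z₂₂ ≡ z₀₂z₂₀ modulo the ideal of S (a, b nonzero constants). Then a hyperplane section H = Σ a_{ij} z_{ij} has multiplicity ≥ 3 at φ(p,p) if and only if a₀₀ = a₀₁ = a₁₀ = a₀₂ = a₂₀ = a₂₂ = 0, so the family of such hyperplane sections has dimension 2. -/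

import Mathlib

/-! The ideal `⟨x, y⟩³` consists of the polynomials without monomials of degree `< 3`
(`MvPolynomial.mem_pow_idealOfVars_iff'`). The terms `x²y²`, `xy²`, `x²y` of `H` already lie in
it, so `H` lies in it iff its part of degree `≤ 2` vanishes, i.e. iff its six coefficients
`a₀₀, a₀₂, a₂₀, a₀₁/b, a₁₀/a, a₂₂` vanish. -/

open MvPolynomial

namespace MvPolynomial

theorem span_X_zero_X_one_eq_idealOfVars (R : Type*) [CommSemiring R] :
    Ideal.span {X 0, X 1} = idealOfVars (Fin 2) R := by
  rw [idealOfVars, Set.range]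
  simp only [Fin.exists_fin_two]
  congr 1
  ext
  simp [eq_comm]

theorem quadratic_mem_pow_idealOfVars_three_iff {R : Type*} [CommSemiring R]
    (c₀ c₁ c₂ c₃ c₄ c₅ : R) :
    C c₀ + C c₁ * X 0 + C c₂ * X 1 + C c₃ * X 0 ^ 2 + C c₄ * X 1 ^ 2 + C c₅ * (X 0 * X 1) ∈
        idealOfVars (Fin 2) R ^ 3 ↔
      c₀ = 0 ∧ c₁ = 0 ∧ c₂ = 0 ∧ c₃ = 0 ∧ c₄ = 0 ∧ c₅ = 0 := by
  constructor
  · intro h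
    rw [mem_pow_idealOfVars_iff'] at h
    have h₀ := h 0 (by simp)
    have h₁ := h (Finsupp.single 0 1) (by simp)
    have h₂ := h (Finsupp.single 1 1) (by simp)
    have h₃ := h (Finsupp.single 0 2) (by simp)
    have h₄ := h (Finsupp.single 1 2) (by simp)
    have h₅ := h (Finsupp.single 0 1 + Finsupp.single 1 1) (by simp)
    simp only [X, monomial_pow, monomial_mul, C_mul_monomial, coeff_add, coeff_C,
      coeff_monomial] at h₀ h₁ h₂ h₃ h₄ h₅
    simp_all [Finsupp.ext_iff, Fin.forall_fin_two, Finsupp.single_apply]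
  · rintro ⟨rfl, rfl, rfl, rfl, rfl, rfl⟩
    simp

end MvPolynomial

/-- In local coordinates x = z₀₂, y = z₂₀ at φ(p,p) on S = C₁ × C₂ ⊂ P⁸, with
z₀₁ = (1/b)x², z₁₀ = (1/a)y², z₁₁ = (1/(ab))x²y², z₁₂ = (1/a)xy²,
z₂₁ = (1/b)x²y, z₂₂ = xy, a hyperplane section H = Σ aᵢⱼ zᵢⱼ has multiplicity
≥ 3 at the origin (i.e. H ∈ ⟨x,y⟩³) if and only if
a₀₀ = a₀₁ = a₁₀ = a₀₂ = a₂₀ = a₂₂ = 0; hence the family has dimension 2. -/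
theorem stmt_4 (k : Type*) [Field k] (a b : k) (ha : a ≠ 0) (hb : b ≠ 0)
    (a00 a01 a02 a10 a11 a12 a20 a21 a22 : k)
    (x y H : MvPolynomial (Fin 2) k) (hx : x = X 0) (hy : y = X 1)
    (hH : H = C a00 + C a02 * x + C a20 * y
        + C (a01 * b⁻¹) * x ^ 2 + C (a10 * a⁻¹) * y ^ 2 + C a22 * (x * y)
        + C (a11 * (a * b)⁻¹) * (x ^ 2 * y ^ 2) + C (a12 * a⁻¹) * (x * y ^ 2)
        + C (a21 * b⁻¹) * (x ^ 2 * y)) :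
    H ∈ (Ideal.span {x, y} : Ideal (MvPolynomial (Fin 2) k)) ^ 3 ↔
      (a00 = 0 ∧ a01 = 0 ∧ a10 = 0 ∧ a02 = 0 ∧ a20 = 0 ∧ a22 = 0) := by
  subst hx hy hH
  set I := idealOfVars (Fin 2) k
  have hx : X 0 ∈ I := Ideal.subset_span ⟨0, rfl⟩
  have hy : X 1 ∈ I := Ideal.subset_span ⟨1, rfl⟩
  have hx2y2 : X 0 ^ 2 * X 1 ^ 2 ∈ I ^ 3 :=
    Ideal.pow_le_pow_right (by norm_num : 3 ≤ 2 + 2)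
      (pow_add I 2 2 ▸ Ideal.mul_mem_mul (Ideal.pow_mem_pow hx 2) (Ideal.pow_mem_pow hy 2))
  have hxy2 : X 0 * X 1 ^ 2 ∈ I ^ 3 := pow_succ' I 2 ▸ Ideal.mul_mem_mul hx (Ideal.pow_mem_pow hy 2)
  have hx2y : X 0 ^ 2 * X 1 ∈ I ^ 3 := pow_succ I 2 ▸ Ideal.mul_mem_mul (Ideal.pow_mem_pow hx 2) hy
  rw [span_X_zero_X_one_eq_idealOfVars, Ideal.add_mem_iff_left _ (Ideal.mul_mem_left _ _ hx2y),
    Ideal.add_mem_iff_left _ (Ideal.mul_mem_left _ _ hxy2),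
    Ideal.add_mem_iff_left _ (Ideal.mul_mem_left _ _ hx2y2),
    quadratic_mem_pow_idealOfVars_three_iff]
  simp only [mul_eq_zero, inv_eq_zero, ha, hb, or_false]
  tauto
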